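/- arXiv:2411.05598 — 2 statements merged into one kernel-verified Lean document; each statement's English description precedes it below -/
import Mathlib

section
/- Let X be a Hilbert A-module, Y a Hilbert B-module, φ : A → L(Y) a *-homomorphism, and V ∈ L(X) with V ⊗ 1 ∈ K(X ⊗_A Y). Then ran(V) ⊆ X·φ^{-1}(K(Y)), i.e., Vξ lies in the closed span of {ξ'a : ξ' ∈ X, a ∈ A with φ(a) ∈ K(Y)} for every ξ ∈ X. -/
/-! Right Hilbert C*-modules over a (possibly non-unital) C*-algebra. -/

noncomputable section

/-- A right Hilbert `B`-module. -/
structure HilbMod (B : Type) [NonUnitalCStarAlgebra B] : Type 1 where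
  X : Type
  [grp : NormedAddCommGroup X]
  [nsc : NormedSpace ℂ X]
  [cpl : CompleteSpace X]
  sm : X → B → X
  ip : X → X → B
  sm_add : ∀ x y b, sm (x + y) b = sm x b + sm y b
  sm_add' : ∀ x b c, sm x (b + c) = sm x b + sm x c
  sm_mul : ∀ x b c, sm (sm x b) c = sm x (b * c)
  sm_smul : ∀ (t : ℂ) x b, sm (t • x) b = t • sm x b
  sm_smul' : ∀ (t : ℂ) x b, sm x (t • b) = t • sm x b
  ip_add : ∀ x y z, ip x (y + z) = ip x y + ip x z
  ip_smul : ∀ (t : ℂ) x y, ip x (t • y) = t • ip x y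
  ip_sm : ∀ x y b, ip x (sm y b) = ip x y * b
  ip_star : ∀ x y, star (ip x y) = ip y x
  ip_pos : ∀ x, ∃ b, ip x x = star b * b
  ip_norm : ∀ x, ‖x‖ ^ 2 = ‖ip x x‖

attribute [instance] HilbMod.grp HilbMod.nsc HilbMod.cpl

variable {B : Type} [NonUnitalCStarAlgebra B]

/-- `Z.setR J` is the closed submodule `Z·J`. -/
def HilbMod.setR (Z : HilbMod B) (J : Set B) : Set Z.X :=
  closure (Submodule.span ℂ {x | ∃ ξ b, b ∈ J ∧ x = Z.sm ξ b} : Set Z.X)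

/-- A generalized compact operator on a Hilbert module: approximable in operator norm by
finite sums of rank-one operators `θ_{ξ,η} : z ↦ ξ·⟨η,z⟩`. -/
def HilbMod.IsCompactOp (Z : HilbMod B) (f : Z.X → Z.X) : Prop :=
  ∀ ε > (0 : ℝ), ∃ (n : ℕ) (ξ η : Fin n → Z.X),
    ∀ z, ‖f z - ∑ i, Z.sm (ξ i) (Z.ip (η i) z)‖ ≤ ε * ‖z‖

/-- A closed (two-sided) ideal of a C*-algebra, as a set. -/
structure IsCIdeal {B : Type} [NonUnitalCStarAlgebra B] (I : Set B) : Prop where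
  isClosed : IsClosed I
  zero_mem : (0 : B) ∈ I
  add_mem : ∀ x y, x ∈ I → y ∈ I → x + y ∈ I
  smul_mem : ∀ (t : ℂ) x, x ∈ I → t • x ∈ I
  mul_left_mem : ∀ b x, x ∈ I → b * x ∈ I
  mul_right_mem : ∀ b x, x ∈ I → x * b ∈ I

/-- `π : B → B'` realizes `B'` as the quotient C*-algebra `B/I`. -/
structure IsQuotAlg {B B' : Type} [NonUnitalCStarAlgebra B] [NonUnitalCStarAlgebra B']
    (π : B → B') (I : Set B) : Prop where
  surj : Function.Surjective π
  map_add : ∀ a b, π (a + b) = π a + π b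
  map_mul : ∀ a b, π (a * b) = π a * π b
  map_star : ∀ a, π (star a) = star (π a)
  map_smul : ∀ (t : ℂ) a, π (t • a) = t • π a
  ker : ∀ a, π a = 0 ↔ a ∈ I

/-! For `ξ ∈ X` the map `T_ξ = t ξ : Y → X ⊗_A Y` is bounded, and since elementary tensors are
total it is adjointable, with `T_ξ* (t x y) = φ ⟨ξ, x⟩ y`. Hence
`φ ⟨ξ₀, V ξ⟩ = T_ξ₀* (V ⊗ 1) T_ξ` is compact for all `ξ₀, ξ`. On the other hand, every `x ∈ X` is
a limit of elements `x · ⟨x · c, x⟩`, where `c = h(⟨x, x⟩)` comes from the functional calculus;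
for `x = V ξ` these lie in `X · φ⁻¹(K(Y))`. -/

namespace HilbMod

variable (Z : HilbMod B)

lemma ip_zero (x : Z.X) : Z.ip x 0 = 0 := by
  simpa using (Z.ip_add x 0 0).symm

lemma zero_ip (x : Z.X) : Z.ip 0 x = 0 := by
  rw [← Z.ip_star, Z.ip_zero, star_zero]

lemma ip_sub (x y z : Z.X) : Z.ip x (y - z) = Z.ip x y - Z.ip x z := by
  have := Z.ip_add x (y - z) z
  rw [sub_add_cancel] at this
  rw [this, add_sub_cancel_right]

lemma sub_ip (x y z : Z.X) : Z.ip (x - y) z = Z.ip x z - Z.ip y z := by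
  rw [← Z.ip_star, Z.ip_sub, star_sub, Z.ip_star, Z.ip_star]

lemma sm_ip (x y : Z.X) (b : B) : Z.ip (Z.sm x b) y = star b * Z.ip x y := by
  rw [← Z.ip_star, Z.ip_sm, star_mul, Z.ip_star]

lemma smul_ip (c : ℂ) (x y : Z.X) : Z.ip (c • x) y = star c • Z.ip x y := by
  rw [← Z.ip_star, Z.ip_smul, star_smul, Z.ip_star]

lemma eq_of_forall_ip_eq {u v : Z.X} (h : ∀ w, Z.ip w u = Z.ip w v) : u = v := by
  have h0 : Z.ip (u - v) (u - v) = 0 := by rw [Z.ip_sub, h, sub_self]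
  have := Z.ip_norm (u - v)
  rwa [h0, norm_zero, sq_eq_zero_iff, norm_eq_zero, sub_eq_zero] at this

lemma norm_ip_le (x y : Z.X) : ‖Z.ip x y‖ ≤ ‖x‖ * ‖y‖ := by
  let _ := CStarAlgebra.spectralOrder B
  have _ := CStarAlgebra.spectralOrderedRing B
  rcases eq_or_ne x 0 with rfl | hx
  · simp [Z.zero_ip]
  set r := ‖x‖ ^ 2
  have hr0 : 0 < r := by positivity
  set c := Z.ip x y
  have hexpand : Z.ip (Z.sm x c - (r : ℂ) • y) (Z.sm x c - (r : ℂ) • y)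
      = star c * Z.ip x x * c - r • (star c * c) - r • (star c * c) + (r * r) • Z.ip y y := by
    have hyx : Z.ip y x = star c := (Z.ip_star x y).symm
    simp only [Z.ip_sub, Z.sub_ip, Z.ip_sm, Z.sm_ip, Z.ip_smul, Z.smul_ip, hyx]
    simp only [Complex.star_def, Complex.conj_ofReal, smul_smul,
      Complex.coe_smul, mul_smul_comm, smul_mul_assoc, mul_assoc]
    abel
  have hpos : 0 ≤ star c * Z.ip x x * c - r • (star c * c) - r • (star c * c)
      + (r * r) • Z.ip y y := by
    obtain ⟨d, hd⟩ := Z.ip_pos (Z.sm x c - (r : ℂ) • y)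
    rw [← hexpand, hd]
    exact star_mul_self_nonneg d
  have hconj : star c * Z.ip x x * c ≤ r • (star c * c) := by
    have := CStarAlgebra.star_left_conjugate_le_norm_smul (a := c) (b := Z.ip x x) (Z.ip_star x x)
    rwa [← Z.ip_norm] at this
  have hcc : star c * c ≤ r • Z.ip y y := by
    rw [← smul_le_smul_iff_of_pos_left hr0, smul_smul]
    calc r • (star c * c) ≤ r • (star c * c) + (r • (star c * c) - star c * Z.ip x x * c) :=
          le_add_of_nonneg_right (sub_nonneg.mpr hconj)
      _ ≤ (r * r) • Z.ip y y := by
          rw [← sub_nonneg]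
          convert hpos using 1
          abel
  have hsq : ‖c‖ ^ 2 ≤ (‖x‖ * ‖y‖) ^ 2 := by
    calc ‖c‖ ^ 2 = ‖star c * c‖ := by rw [CStarRing.norm_star_mul_self, sq]
      _ ≤ ‖r • Z.ip y y‖ := CStarAlgebra.norm_le_norm_of_nonneg_of_le (star_mul_self_nonneg c) hcc
      _ = (‖x‖ * ‖y‖) ^ 2 := by rw [norm_smul, ← Z.ip_norm, Real.norm_of_nonneg hr0.le]; ring
  exact (pow_le_pow_iff_left₀ (norm_nonneg _) (by positivity) two_ne_zero).mp hsq

lemma continuous_ip (w : Z.X) : Continuous (Z.ip w) :=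
  AddMonoidHomClass.continuous_of_bound (AddMonoidHom.mk' (Z.ip w) (Z.ip_add w)) ‖w‖
    (Z.norm_ip_le w)

lemma ip_sub_sm_cfcₙ (x : Z.X) {p : ℝ → ℝ} (hp : Continuous p) (hp0 : p 0 = 0) :
    Z.ip (x - Z.sm x (cfcₙ p (Z.ip x x))) (x - Z.sm x (cfcₙ p (Z.ip x x)))
      = cfcₙ (fun τ => τ * (1 - p τ) ^ 2) (Z.ip x x) := by
  set a := Z.ip x x
  have ha : IsSelfAdjoint a := Z.ip_star x x
  have hP : star (cfcₙ p a) = cfcₙ p a := (cfcₙ_predicate p a).star_eq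
  calc _ = a - cfcₙ p a * a - (a * cfcₙ p a - cfcₙ p a * (a * cfcₙ p a)) := by
        rw [Z.ip_sub, Z.sub_ip, Z.sub_ip, Z.ip_sm, Z.sm_ip, Z.sm_ip, Z.ip_sm, hP]
    _ = cfcₙ (fun τ => τ - p τ * τ - (τ * p τ - p τ * (τ * p τ))) a := by
        rw [cfcₙ_sub (fun τ => τ - p τ * τ) (fun τ => τ * p τ - p τ * (τ * p τ)) a,
          cfcₙ_sub (fun τ => τ) (fun τ => p τ * τ) a,
          cfcₙ_sub (fun τ => τ * p τ) (fun τ => p τ * (τ * p τ)) a,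
          cfcₙ_mul p (fun τ => τ * p τ) a, cfcₙ_mul p (fun τ => τ) a,
          cfcₙ_mul (fun τ => τ) p a, cfcₙ_id' ℝ a]
    _ = _ := cfcₙ_congr fun τ _ => by ring

lemma mem_closure_range_sm_ip (x : Z.X) :
    x ∈ closure (Set.range fun y => Z.sm x (Z.ip y x)) := by
  rw [Metric.mem_closure_iff]
  intro ε hε
  set a := Z.ip x x
  have ha : IsSelfAdjoint a := Z.ip_star x x
  set r : ℝ := (ε ^ 2)⁻¹
  have hεr : ε ^ 2 * r = 1 := mul_inv_cancel₀ (by positivity)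
  have hden : ∀ τ : ℝ, 0 < 1 + r ^ 2 * τ ^ 2 := fun τ => by positivity
  set h : ℝ → ℝ := fun τ => r ^ 2 * τ / (1 + r ^ 2 * τ ^ 2)
  have hh : Continuous h := (continuous_const.mul continuous_id).div (by fun_prop)
    fun τ => (hden τ).ne'
  refine ⟨Z.sm x (Z.ip (Z.sm x (cfcₙ h a)) x), ⟨_, rfl⟩, ?_⟩
  have hP : Z.ip (Z.sm x (cfcₙ h a)) x = cfcₙ (fun τ => h τ * τ) a := by
    rw [Z.sm_ip, (cfcₙ_predicate h a).star_eq, cfcₙ_mul h (fun τ => τ) a, cfcₙ_id' ℝ a]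
  have hsq : ‖x - Z.sm x (cfcₙ (fun τ => h τ * τ) a)‖ ^ 2 ≤ ε ^ 2 / 2 := by
    rw [Z.ip_norm, Z.ip_sub_sm_cfcₙ x (p := fun τ => h τ * τ) (by fun_prop) (by simp)]
    refine norm_cfcₙ_le fun τ _ => ?_
    have h1 : 1 - h τ * τ = (1 + r ^ 2 * τ ^ 2)⁻¹ := by
      have := (hden τ).ne'
      simp only [h]
      field_simp
      ring
    have hamgm : 2 * r * |τ| ≤ 1 + r ^ 2 * τ ^ 2 := by
      nlinarith [sq_nonneg (1 - r * |τ|), sq_abs τ]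
    rw [h1, Real.norm_eq_abs, abs_mul, inv_pow, abs_inv, abs_of_pos (pow_pos (hden τ) 2),
      ← div_eq_mul_inv, div_le_iff₀ (pow_pos (hden τ) 2)]
    calc |τ| = ε ^ 2 / 2 * (2 * r * |τ|) := by linear_combination (-|τ|) * hεr
      _ ≤ ε ^ 2 / 2 * (1 + r ^ 2 * τ ^ 2) := by gcongr
      _ ≤ ε ^ 2 / 2 * (1 + r ^ 2 * τ ^ 2) ^ 2 := by
          gcongr
          exact le_self_pow₀ (le_add_of_nonneg_right (by positivity)) two_ne_zero
  rw [dist_eq_norm, hP]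
  exact lt_of_pow_lt_pow_left₀ 2 hε.le (hsq.trans_lt (by linarith [pow_pos hε 2]))

variable {Z} {W : HilbMod B}

def IsAdjointPair (R : W.X → Z.X) (S : Z.X → W.X) : Prop :=
  ∀ w z, Z.ip (R w) z = W.ip w (S z)

namespace IsAdjointPair

variable {R : W.X → Z.X} {S : Z.X → W.X}

lemma symm (h : IsAdjointPair R S) : IsAdjointPair S R := fun z w => by
  rw [← Z.ip_star, h, W.ip_star]

lemma map_add (h : IsAdjointPair R S) (z z' : Z.X) : S (z + z') = S z + S z' :=
  W.eq_of_forall_ip_eq fun w => by rw [← h, Z.ip_add, W.ip_add, h, h]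

lemma map_smul (h : IsAdjointPair R S) (c : ℂ) (z : Z.X) : S (c • z) = c • S z :=
  W.eq_of_forall_ip_eq fun w => by rw [← h, Z.ip_smul, W.ip_smul, h]

lemma map_sm (h : IsAdjointPair R S) (z : Z.X) (b : B) : S (Z.sm z b) = W.sm (S z) b :=
  W.eq_of_forall_ip_eq fun w => by rw [← h, Z.ip_sm, W.ip_sm, h]

/-- Hellinger–Toeplitz: the closed graph theorem applies since `⟪w, S ·⟫ = ⟪R w, ·⟫` is
continuous for every `w`. -/
lemma exists_bound (h : IsAdjointPair R S) : ∃ C, 0 ≤ C ∧ ∀ z, ‖S z‖ ≤ C * ‖z‖ := by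
  let L : Z.X →ₗ[ℂ] W.X := { toFun := S, map_add' := h.map_add, map_smul' := h.map_smul }
  have hL : Continuous L := by
    refine L.continuous_of_seq_closed_graph fun u z v hu hSu => ?_
    refine W.eq_of_forall_ip_eq fun w => tendsto_nhds_unique
      (((W.continuous_ip w).tendsto v).comp hSu) ?_
    have hlim := ((Z.continuous_ip (R w)).tendsto z).comp hu
    simp only [Function.comp_def, h w] at hlim
    exact hlim
  obtain ⟨C, hC, hbound⟩ := (⟨L, hL⟩ : Z.X →L[ℂ] W.X).bound
  exact ⟨C, hC.le, hbound⟩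

end IsAdjointPair

lemma norm_le_of_forall_ip_eq {R : W.X → Z.X} {C : ℝ} (hC : 0 ≤ C)
    (hR : ∀ w, ‖R w‖ ≤ C * ‖w‖) {z : Z.X} {v : W.X} (h : ∀ w, Z.ip (R w) z = W.ip w v) :
    ‖v‖ ≤ C * ‖z‖ := by
  rcases (norm_nonneg v).eq_or_lt with hv | hv
  · rw [← hv]; positivity
  refine le_of_mul_le_mul_left ?_ hv
  calc ‖v‖ * ‖v‖ = ‖Z.ip (R v) z‖ := by rw [h, ← W.ip_norm, sq]
    _ ≤ ‖R v‖ * ‖z‖ := Z.norm_ip_le _ _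
    _ ≤ ‖v‖ * (C * ‖z‖) := by nlinarith [hR v, norm_nonneg z]

lemma exists_isAdjointPair_of_dense {R : W.X → Z.X} {C : ℝ} (hC : 0 ≤ C)
    (hR : ∀ w, ‖R w‖ ≤ C * ‖w‖) {D : Set Z.X}
    (hD : closure (Submodule.span ℂ D : Set Z.X) = Set.univ)
    (hRD : ∀ d ∈ D, ∃ v, ∀ w, Z.ip (R w) d = W.ip w v) :
    ∃ S : Z.X → W.X, IsAdjointPair R S := by
  let G : Submodule ℂ Z.X :=
    { carrier := {z | ∃ v, ∀ w, Z.ip (R w) z = W.ip w v}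
      add_mem' := by
        rintro z z' ⟨v, hv⟩ ⟨v', hv'⟩
        exact ⟨v + v', fun w => by rw [Z.ip_add, W.ip_add, hv, hv']⟩
      zero_mem' := ⟨0, fun w => by rw [Z.ip_zero, W.ip_zero]⟩
      smul_mem' := by
        rintro c z ⟨v, hv⟩
        exact ⟨c • v, fun w => by rw [Z.ip_smul, W.ip_smul, hv]⟩ }
  have hG : IsClosed (G : Set Z.X) := by
    refine isClosed_of_closure_subset fun z hz => ?_
    obtain ⟨u, huG, hu⟩ := mem_closure_iff_seq_limit.mp hz
    choose v hv using huG
    have hv_cauchy : CauchySeq v := by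
      refine Metric.cauchySeq_iff.mpr fun ε hε => ?_
      obtain ⟨N, hN⟩ := Metric.cauchySeq_iff.mp hu.cauchySeq (ε / (C + 1)) (by positivity)
      refine ⟨N, fun m hm n hn => ?_⟩
      have hmn : ‖v m - v n‖ ≤ C * ‖u m - u n‖ :=
        norm_le_of_forall_ip_eq hC hR fun w => by rw [Z.ip_sub, W.ip_sub, hv, hv]
      have hu_mn := hN m hm n hn
      rw [dist_eq_norm] at hu_mn ⊢
      calc ‖v m - v n‖ ≤ C * (ε / (C + 1)) := hmn.trans (by gcongr)
        _ < ε := by rw [mul_div_assoc', div_lt_iff₀ (by positivity)]; nlinarith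
    obtain ⟨v₀, hv₀⟩ := cauchySeq_tendsto_of_complete hv_cauchy
    refine ⟨v₀, fun w => tendsto_nhds_unique (((Z.continuous_ip (R w)).tendsto z).comp hu) ?_⟩
    simpa only [Function.comp_def, hv] using ((W.continuous_ip w).tendsto v₀).comp hv₀
  have hspan : closure (Submodule.span ℂ D : Set Z.X) ⊆ G :=
    closure_minimal (Submodule.span_le.mpr hRD) hG
  choose S hS using fun z => hspan (hD ▸ Set.mem_univ z)
  exact ⟨S, fun w z => hS z w⟩

lemma IsCompactOp.comp_comp {K : Z.X → Z.X} (hK : Z.IsCompactOp K) {R₀ R₁ : W.X → Z.X}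
    {S₀ S₁ : Z.X → W.X} (h₀ : IsAdjointPair R₀ S₀) (h₁ : IsAdjointPair R₁ S₁) :
    W.IsCompactOp (fun w => S₀ (K (R₁ w))) := by
  obtain ⟨C₀, hC₀, hS₀⟩ := h₀.exists_bound
  obtain ⟨C₁, hC₁, hR₁⟩ := h₁.symm.exists_bound
  intro ε hε
  obtain ⟨n, ξ, η, hKε⟩ := hK (ε / (C₀ * C₁ + 1)) (by positivity)
  refine ⟨n, fun i => S₀ (ξ i), fun i => S₁ (η i), fun w => ?_⟩
  let S₀' : Z.X →+ W.X := AddMonoidHom.mk' S₀ h₀.map_add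
  have hθ : ∑ i, W.sm (S₀ (ξ i)) (W.ip (S₁ (η i)) w)
      = S₀' (∑ i, Z.sm (ξ i) (Z.ip (η i) (R₁ w))) := by
    simp only [map_sum, S₀', AddMonoidHom.mk'_apply, h₀.map_sm, h₁.symm _ w]
  change ‖S₀' (K (R₁ w)) - _‖ ≤ _
  rw [hθ, ← map_sub S₀']
  calc ‖S₀ (K (R₁ w) - ∑ i, Z.sm (ξ i) (Z.ip (η i) (R₁ w)))‖
      ≤ C₀ * (ε / (C₀ * C₁ + 1) * (C₁ * ‖w‖)) := by
        refine (hS₀ _).trans ?_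
        gcongr
        exact (hKε _).trans (by gcongr; exact hR₁ w)
    _ = C₀ * C₁ / (C₀ * C₁ + 1) * (ε * ‖w‖) := by ring
    _ ≤ ε * ‖w‖ :=
        mul_le_of_le_one_left (by positivity) (div_le_one_of_le₀ (by linarith) (by positivity))

end HilbMod

section InteriorTensor

variable {A : Type} [NonUnitalCStarAlgebra A] {X : HilbMod A} {Y T : HilbMod B}
  {φ : A → Y.X → Y.X} {t : X.X → Y.X → T.X}

lemma exists_bound_tensor (hφ_adj : ∀ a x y, Y.ip (φ a x) y = Y.ip x (φ (star a) y))
    (ht_ip : ∀ x x' y y', T.ip (t x y) (t x' y') = Y.ip y (φ (X.ip x x') y')) (x : X.X) :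
    ∃ C, 0 ≤ C ∧ ∀ η, ‖t x η‖ ≤ C * ‖η‖ := by
  obtain ⟨M, hM0, hM⟩ := (HilbMod.IsAdjointPair.symm (hφ_adj (X.ip x x))).exists_bound
  refine ⟨√M, Real.sqrt_nonneg M, fun η => ?_⟩
  refine (pow_le_pow_iff_left₀ (norm_nonneg _) (by positivity) two_ne_zero).mp ?_
  rw [T.ip_norm, ht_ip, mul_pow, Real.sq_sqrt hM0]
  calc ‖Y.ip η (φ (X.ip x x) η)‖ ≤ ‖η‖ * (M * ‖η‖) :=
        (Y.norm_ip_le _ _).trans (by gcongr; exact hM η)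
    _ = M * ‖η‖ ^ 2 := by ring

lemma exists_isAdjointPair_tensor (hφ_adj : ∀ a x y, Y.ip (φ a x) y = Y.ip x (φ (star a) y))
    (ht_ip : ∀ x x' y y', T.ip (t x y) (t x' y') = Y.ip y (φ (X.ip x x') y'))
    (ht_dense : closure (Submodule.span ℂ {z | ∃ x y, z = t x y} : Set T.X) = Set.univ)
    (x : X.X) : ∃ S : T.X → Y.X, HilbMod.IsAdjointPair (t x) S := by
  obtain ⟨C, hC, hbound⟩ := exists_bound_tensor hφ_adj ht_ip x
  refine HilbMod.exists_isAdjointPair_of_dense hC hbound ht_dense ?_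
  rintro _ ⟨x', y', rfl⟩
  exact ⟨φ (X.ip x x') y', fun η => ht_ip x x' η y'⟩

lemma isCompactOp_ip_of_isCompactOp_tensor
    (hφ_adj : ∀ a x y, Y.ip (φ a x) y = Y.ip x (φ (star a) y))
    (ht_ip : ∀ x x' y y', T.ip (t x y) (t x' y') = Y.ip y (φ (X.ip x x') y'))
    (ht_dense : closure (Submodule.span ℂ {z | ∃ x y, z = t x y} : Set T.X) = Set.univ)
    {V : X.X → X.X} {Vt : T.X → T.X} (hVt : ∀ x y, Vt (t x y) = t (V x) y)
    (hVt_compact : T.IsCompactOp Vt) (ξ₀ ξ : X.X) :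
    Y.IsCompactOp (φ (X.ip ξ₀ (V ξ))) := by
  obtain ⟨S₀, h₀⟩ := exists_isAdjointPair_tensor hφ_adj ht_ip ht_dense ξ₀
  obtain ⟨S₁, h₁⟩ := exists_isAdjointPair_tensor hφ_adj ht_ip ht_dense ξ
  have hfactor : φ (X.ip ξ₀ (V ξ)) = fun η => S₀ (Vt (t ξ η)) :=
    funext fun η => Y.eq_of_forall_ip_eq fun w => by rw [← h₀, hVt, ht_ip]
  rw [hfactor]
  exact hVt_compact.comp_comp h₀ h₁

end InteriorTensor

theorem stmt12_general {A B : Type} [NonUnitalCStarAlgebra A] [NonUnitalCStarAlgebra B]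
    (X : HilbMod A) (Y : HilbMod B) (φ : A → Y.X → Y.X)
    (hφ_adj : ∀ a x y, Y.ip (φ a x) y = Y.ip x (φ (star a) y))
    -- the interior tensor product `T = X ⊗_A Y`:
    (T : HilbMod B) (t : X.X → Y.X → T.X)
    (ht_ip : ∀ x x' y y', T.ip (t x y) (t x' y') = Y.ip y (φ (X.ip x x') y'))
    (ht_dense : closure (Submodule.span ℂ {z | ∃ x y, z = t x y} : Set T.X) = Set.univ)
    (V : X.X → X.X)
    -- `V ⊗ 1 ∈ K(X ⊗_A Y)`:
    (hVt : ∃ Vt : T.X → T.X, (∀ x y, Vt (t x y) = t (V x) y) ∧ T.IsCompactOp Vt) :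
    ∀ ξ, V ξ ∈ closure (Submodule.span ℂ
      {z : X.X | ∃ ξ' a, Y.IsCompactOp (φ a) ∧ z = X.sm ξ' a} : Set X.X) := by
  obtain ⟨Vt, hVt_tensor, hVt_compact⟩ := hVt
  intro ξ
  refine closure_mono ?_ (X.mem_closure_range_sm_ip (V ξ))
  rintro _ ⟨ξ₀, rfl⟩
  exact Submodule.subset_span ⟨V ξ, _, isCompactOp_ip_of_isCompactOp_tensor hφ_adj ht_ip
    ht_dense hVt_tensor hVt_compact ξ₀ ξ, rfl⟩

/-- if `X` is a Hilbert `A`-module, `Y` a Hilbert `B`-module,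
`φ : A → L(Y)` a *-homomorphism, and `V ∈ L(X)` satisfies `V ⊗ 1 ∈ K(X ⊗_A Y)`,
then `ran(V) ⊆ X·φ⁻¹(K(Y))`.

The interior tensor product `X ⊗_A Y` is represented by a Hilbert `B`-module `T`
together with a map `t : X × Y → T` with the defining properties of the tensor product. -/
theorem stmt12 {A B : Type} [NonUnitalCStarAlgebra A] [NonUnitalCStarAlgebra B]
    (X : HilbMod A) (Y : HilbMod B) (φ : A → Y.X → Y.X)
    (hφ_add : ∀ a x y, φ a (x + y) = φ a x + φ a y)
    (hφ_add' : ∀ a b x, φ (a + b) x = φ a x + φ b x)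
    (hφ_smul : ∀ a (t : ℂ) x, φ a (t • x) = t • φ a x)
    (hφ_smul' : ∀ (t : ℂ) a x, φ (t • a) x = t • φ a x)
    (hφ_mul : ∀ a b x, φ (a * b) x = φ a (φ b x))
    (hφ_adj : ∀ a x y, Y.ip (φ a x) y = Y.ip x (φ (star a) y))
    -- the interior tensor product `T = X ⊗_A Y`:
    (T : HilbMod B) (t : X.X → Y.X → T.X)
    (ht_addl : ∀ x x' y, t (x + x') y = t x y + t x' y)
    (ht_addr : ∀ x y y', t x (y + y') = t x y + t x y')
    (ht_smul : ∀ (c : ℂ) x y, t (c • x) y = c • t x y)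
    (ht_bal : ∀ x a y, t (X.sm x a) y = t x (φ a y))
    (ht_smr : ∀ x y b, t x (Y.sm y b) = T.sm (t x y) b)
    (ht_ip : ∀ x x' y y', T.ip (t x y) (t x' y') = Y.ip y (φ (X.ip x x') y'))
    (ht_dense : closure (Submodule.span ℂ {z | ∃ x y, z = t x y} : Set T.X) = Set.univ)
    -- `V ∈ L(X)`:
    (V : X.X → X.X)
    (hV_add : ∀ x y, V (x + y) = V x + V y)
    (hV_smul : ∀ (c : ℂ) x, V (c • x) = c • V x)
    (hV_adj : ∃ V' : X.X → X.X, ∀ x y, X.ip (V x) y = X.ip x (V' y))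
    -- `V ⊗ 1 ∈ K(X ⊗_A Y)`:
    (hVt : ∃ Vt : T.X → T.X, (∀ x y, Vt (t x y) = t (V x) y) ∧ T.IsCompactOp Vt) :
    ∀ ξ, V ξ ∈ closure (Submodule.span ℂ
      {z : X.X | ∃ ξ' a, Y.IsCompactOp (φ a) ∧ z = X.sm ξ' a} : Set X.X) :=
  stmt12_general X Y φ hφ_adj T t ht_ip ht_dense V hVt
end
end

section
/- Let X be an A-correspondence, Y a B-correspondence, R an A-B correspondence, S a B-A correspondence with X ≅ R ⊗_B S and Y ≅ S ⊗_A R. Let I = span⟨X,X⟩ and J = span⟨Y,Y⟩. Then IRJ ⊗_J JSI ≅ IXI and JSI ⊗_I IRJ ≅ JYJ as correspondences. Moreover, if X is full (I = A), then JYJ is full as a J-correspondence. -/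
/-! Basic framework: C*-correspondences over (possibly non-unital) C*-algebras,
interior tensor products (characterized by their universal properties),
closed ideals, and unitary isomorphisms of correspondences. -/

noncomputable section

/-- A (non-degenerate) A–B C*-correspondence: a right Hilbert `B`-module `X`
together with a left action of `A` by adjointable operators. -/
structure Corr (A B : Type) [NonUnitalCStarAlgebra A] [NonUnitalCStarAlgebra B] : Type 1 where
  X : Type
  [grp : NormedAddCommGroup X]
  [nsc : NormedSpace ℂ X]
  [cpl : CompleteSpace X]
  /-- the right action of `B` -/
  sm : X → B → X
  /-- the `B`-valued inner product (linear in the second variable) -/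
  ip : X → X → B
  /-- the left action of `A` -/
  φ : A → X → X
  sm_add : ∀ x y b, sm (x + y) b = sm x b + sm y b
  sm_add' : ∀ x b c, sm x (b + c) = sm x b + sm x c
  sm_mul : ∀ x b c, sm (sm x b) c = sm x (b * c)
  sm_smul : ∀ (t : ℂ) x b, sm (t • x) b = t • sm x b
  sm_smul' : ∀ (t : ℂ) x b, sm x (t • b) = t • sm x b
  ip_add : ∀ x y z, ip x (y + z) = ip x y + ip x z
  ip_smul : ∀ (t : ℂ) x y, ip x (t • y) = t • ip x y
  ip_sm : ∀ x y b, ip x (sm y b) = ip x y * b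
  ip_star : ∀ x y, star (ip x y) = ip y x
  ip_pos : ∀ x, ∃ b, ip x x = star b * b
  ip_norm : ∀ x, ‖x‖ ^ 2 = ‖ip x x‖
  φ_add : ∀ a x y, φ a (x + y) = φ a x + φ a y
  φ_add' : ∀ a b x, φ (a + b) x = φ a x + φ b x
  φ_smul : ∀ a (t : ℂ) x, φ a (t • x) = t • φ a x
  φ_smul' : ∀ (t : ℂ) a x, φ (t • a) x = t • φ a x
  φ_mul : ∀ a b x, φ (a * b) x = φ a (φ b x)
  φ_adj : ∀ a x y, ip (φ a x) y = ip x (φ (star a) y)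
  /-- non-degeneracy of the left action -/
  nondeg : closure (Submodule.span ℂ {z | ∃ a x, z = φ a x} : Set X) = Set.univ

attribute [instance] Corr.grp Corr.nsc Corr.cpl

variable {A B C : Type} [NonUnitalCStarAlgebra A] [NonUnitalCStarAlgebra B]
  [NonUnitalCStarAlgebra C]

/-- `Z.setR I` is the closed submodule `Z·I` of `Z`. -/
def Corr.setR (Z : Corr A B) (I : Set B) : Set Z.X :=
  closure (Submodule.span ℂ {x | ∃ ξ b, b ∈ I ∧ x = Z.sm ξ b} : Set Z.X)

/-- `Z.setL I` is the closed subspace `I·Z` of `Z`. -/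
def Corr.setL (Z : Corr A B) (I : Set A) : Set Z.X :=
  closure (Submodule.span ℂ {x | ∃ a ξ, a ∈ I ∧ x = Z.φ a ξ} : Set Z.X)

/-- `Z⁻¹(I) = {a ∈ A : φ_Z(a)Z ⊆ ZI}`. -/
def Corr.inv (Z : Corr A B) (I : Set B) : Set A := {a | ∀ ξ, Z.φ a ξ ∈ Z.setR I}

/-- The closed ideal of `B` generated by the inner products of `Z`. -/
def Corr.ipSet (Z : Corr A B) : Set B :=
  closure (Submodule.span ℂ {b | ∃ x y, b = Z.ip x y} : Set B)

/-- A generalized compact operator on the underlying Hilbert module of a correspondence: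
one that is approximable in operator norm by finite sums of "rank one" operators
`θ_{ξ,η} : z ↦ ξ·⟨η,z⟩`. -/
def Corr.IsCompactOp (Z : Corr A B) (f : Z.X → Z.X) : Prop :=
  ∀ ε > (0 : ℝ), ∃ (n : ℕ) (ξ η : Fin n → Z.X),
    ∀ z, ‖f z - ∑ i, Z.sm (ξ i) (Z.ip (η i) z)‖ ≤ ε * ‖z‖

/-- `t : Z₁ × Z₂ → T` exhibits `T` as the interior tensor product `Z₁ ⊗_B Z₂`. -/
structure IsTensor (Z₁ : Corr A B) (Z₂ : Corr B C) (T : Corr A C)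
    (t : Z₁.X → Z₂.X → T.X) : Prop where
  add_left : ∀ x x' y, t (x + x') y = t x y + t x' y
  add_right : ∀ x y y', t x (y + y') = t x y + t x y'
  smul_left : ∀ (c : ℂ) x y, t (c • x) y = c • t x y
  balanced : ∀ x b y, t (Z₁.sm x b) y = t x (Z₂.φ b y)
  sm_right : ∀ x y c, t x (Z₂.sm y c) = T.sm (t x y) c
  act_left : ∀ a x y, T.φ a (t x y) = t (Z₁.φ a x) y
  inner : ∀ x x' y y', T.ip (t x y) (t x' y') = Z₂.ip y (Z₂.φ (Z₁.ip x x') y')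
  dense : closure (Submodule.span ℂ {z | ∃ x y, z = t x y} : Set T.X) = Set.univ

/-- `X ≅ Z₁ ⊗ Z₂` (unitary isomorphism with the interior tensor product). -/
def IsTensorProd (Z₁ : Corr A B) (Z₂ : Corr B C) (T : Corr A C) : Prop :=
  ∃ t, IsTensor Z₁ Z₂ T t

/-- A unitary isomorphism of A–B correspondences. -/
def CorrIso (Z W : Corr A B) : Prop :=
  ∃ u : Z.X → W.X, Function.Surjective u ∧ (∀ x y, u (x + y) = u x + u y) ∧
    (∀ (c : ℂ) x, u (c • x) = c • u x) ∧ (∀ a x, u (Z.φ a x) = W.φ a (u x)) ∧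
    (∀ x b, u (Z.sm x b) = W.sm (u x) b) ∧ (∀ x y, W.ip (u x) (u y) = Z.ip x y)

end

noncomputable section

variable {A B : Type} [NonUnitalCStarAlgebra A] [NonUnitalCStarAlgebra B]

/-- The two-sided compression `I·Z·J` of a correspondence by ideals `I`, `J`. -/
def Corr.comp2 (Z : Corr A B) (I : Set A) (J : Set B) : Set Z.X :=
  closure (Submodule.span ℂ
    {z : Z.X | ∃ a ξ b, a ∈ I ∧ b ∈ J ∧ z = Z.sm (Z.φ a ξ) b} : Set Z.X)

/-!
Write `I = ⟨X, X⟩` and `J = ⟨Y, Y⟩`. Since `⟨t ρ σ, t ρ' σ'⟩ = ⟨σ, ⟨ρ, ρ'⟩ σ'⟩`, the ideal `I` lies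
in `⟨S, S⟩`, and `⟨r, ⟨σ, σ'⟩ r'⟩ = ⟨u σ r, u σ' r'⟩` then gives `⟨R, I R⟩ ⊆ J`. A vector `z` with
`⟨z, z⟩ ∈ J` is a limit of `z ⟨z, z⟩ h`, so `I R ⊆ R J`, and factoring `a ≈ a (a⋆a h)` inside `I`
upgrades this to `I R ⊆ I R J`. Hence every generator `a (r ⊗ s) a'` of `I X I` is
`(a r) ⊗ (s a')` with `a r ∈ I R J`; approximating `a r` by sums of `(a₁ ρ) b` with `b ∈ J` and
moving `b` across the tensor sign puts it in the closed span of `I R J ⊗ J S I`. The reverse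
inclusion is the bimodule property of `t`, and the second isomorphism is the first with the roles
of `(R, t)` and `(S, u)` exchanged.

If `I = A`, every element of `A` is approximated by `⟨σ, ⟨ρ, ρ'⟩ σ'⟩`, which shows that `J` is
generated by the `⟨η, d η'⟩` with `d ∈ J`; writing `d ≈ d (d⋆d h)` splits these as inner products
`⟨d⋆ η, (d⋆d h) η'⟩` of vectors of `J Y J`.
-/

section ClosedSpan

variable {M N : Type*} [NormedAddCommGroup M] [NormedSpace ℂ M]
  [NormedAddCommGroup N] [NormedSpace ℂ N]

def closedSpan (s : Set M) : Submodule ℂ M := (Submodule.span ℂ s).topologicalClosure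

lemma subset_closedSpan (s : Set M) : s ⊆ closedSpan s :=
  Submodule.subset_span.trans (Submodule.le_topologicalClosure _)

lemma isClosed_closedSpan (s : Set M) : IsClosed (closedSpan s : Set M) :=
  Submodule.isClosed_topologicalClosure _

lemma closedSpan_le {s : Set M} {p : Submodule ℂ M} (hp : IsClosed (p : Set M))
    (hs : s ⊆ p) : closedSpan s ≤ p :=
  Submodule.topologicalClosure_minimal _ (Submodule.span_le.mpr hs) hp

lemma closedSpan_mono {s t : Set M} (h : s ⊆ closedSpan t) : closedSpan s ≤ closedSpan t :=
  closedSpan_le (isClosed_closedSpan t) h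

lemma closedSpan_mapsTo {σ : ℂ →+* ℂ} (f : M →SL[σ] N) {s : Set M} {t : Set N}
    (h : Set.MapsTo f s (closedSpan t)) : Set.MapsTo f (closedSpan s) (closedSpan t) := by
  have : closedSpan s ≤ (closedSpan t).comap (f : M →ₛₗ[σ] N) :=
    closedSpan_le ((isClosed_closedSpan t).preimage f.continuous) h
  exact fun x hx => this hx

lemma mem_closedSpan_of_dense {s : Set M} (hs : (closedSpan s : Set M) = Set.univ) (x : M) :
    x ∈ closedSpan s := by
  rw [← SetLike.mem_coe, hs]
  trivial

end ClosedSpan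

section Approx

lemma mem_closure_of_forall_norm_sub_sq_le {M : Type*} [SeminormedAddCommGroup M] {x : M}
    {s : Set M} (h : ∀ δ > 0, ∃ y ∈ s, ‖x - y‖ ^ 2 ≤ δ) : x ∈ closure s := by
  refine Metric.mem_closure_iff.mpr fun ε hε => ?_
  obtain ⟨y, hy, hxy⟩ := h ((ε / 2) ^ 2) (by positivity)
  refine ⟨y, hy, ?_⟩
  rw [dist_eq_norm]
  have := (pow_le_pow_iff_left₀ (norm_nonneg _) (by positivity) two_ne_zero).mp hxy
  linarith

lemma mul_one_sub_sq_le {s ε : ℝ} (hs : 0 ≤ s) (hε : 0 < ε) :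
    s * (1 - s * (s / (s ^ 2 + ε ^ 2))) ^ 2 ≤ ε := by
  have hd : 0 < s ^ 2 + ε ^ 2 := by positivity
  have h1 : 1 - s * (s / (s ^ 2 + ε ^ 2)) = ε ^ 2 / (s ^ 2 + ε ^ 2) := by
    field_simp
    ring
  have h2 : 2 * s * ε ≤ s ^ 2 + ε ^ 2 := by nlinarith [sq_nonneg (s - ε)]
  rw [h1, div_pow, mul_div_assoc', div_le_iff₀ (by positivity)]
  calc s * (ε ^ 2) ^ 2 ≤ ε * (2 * s * ε * ε ^ 2) := by nlinarith [pow_pos hε 4]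
    _ ≤ ε * ((s ^ 2 + ε ^ 2) * (s ^ 2 + ε ^ 2)) :=
      mul_le_mul_of_nonneg_left (mul_le_mul h2 (by nlinarith) (by positivity) hd.le) hε.le
    _ = ε * (s ^ 2 + ε ^ 2) ^ 2 := by ring

variable {E : Type*} [NonUnitalCStarAlgebra E]

/- `c - g c - c g + g c g` is `(1 - g) c (1 - g)`; for `g = cfcₙ (s ↦ s² / (s² + ε²)) c` it is
`cfcₙ (s ↦ s (1 - s² / (s² + ε²))²) c`. Writing `g = c h` keeps `g` in every ideal containing `c`. -/
lemma exists_approxUnit_of_nonneg [PartialOrder E] [StarOrderedRing E] {c : E} (hc : 0 ≤ c)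
    {ε : ℝ} (hε : 0 < ε) :
    ∃ g : E, (∃ h, g = c * h) ∧ IsSelfAdjoint g ∧ ‖c - g * c - c * g + g * c * g‖ ≤ ε := by
  set m : ℝ → ℝ := fun s => s / (s ^ 2 + ε ^ 2)
  have hm : Continuous m := continuous_id.div (by fun_prop) fun s => by positivity
  have hm0 : m 0 = 0 := by simp [m]
  set g := cfcₙ (fun s => s * m s) c
  have hgc : g = c * cfcₙ m c := by
    have := cfcₙ_mul (fun s : ℝ => s) m c
    rwa [cfcₙ_id' ℝ c] at this
  refine ⟨g, ⟨_, hgc⟩, cfcₙ_predicate _ c, ?_⟩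
  have hF : (fun s => s * (1 - s * m s) ^ 2) =
      fun s => s - s * m s * s - s * (s * m s) + s * m s * s * (s * m s) := by
    funext s
    ring
  have key : cfcₙ (fun s => s * (1 - s * m s) ^ 2) c = c - g * c - c * g + g * c * g := by
    rw [hF, cfcₙ_add (fun s => s - s * m s * s - s * (s * m s))
        (fun s => s * m s * s * (s * m s)) c,
      cfcₙ_sub (fun s => s - s * m s * s) (fun s => s * (s * m s)) c,
      cfcₙ_sub (fun s => s) (fun s => s * m s * s) c,
      cfcₙ_mul (fun s => s * m s * s) (fun s => s * m s) c,
      cfcₙ_mul (fun s => s * m s) (fun s => s) c,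
      cfcₙ_mul (fun s => s) (fun s => s * m s) c, cfcₙ_id' ℝ c]
  rw [← key]
  refine norm_cfcₙ_le fun s hs => ?_
  have hs0 : 0 ≤ s := quasispectrum_nonneg_of_nonneg c hc s hs
  rw [Real.norm_of_nonneg (by positivity)]
  exact mul_one_sub_sq_le hs0 hε

lemma mem_closure_mul_star_mul_self_mul (a : E) :
    a ∈ closure (Set.range fun h => a * (star a * a * h)) := by
  let _ := CStarAlgebra.spectralOrder E
  have := CStarAlgebra.spectralOrderedRing E
  refine mem_closure_of_forall_norm_sub_sq_le fun δ hδ => ?_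
  obtain ⟨_, ⟨h, rfl⟩, hg, hle⟩ := exists_approxUnit_of_nonneg (star_mul_self_nonneg a) hδ
  refine ⟨_, ⟨h, rfl⟩, ?_⟩
  rw [sq, ← CStarRing.norm_star_mul_self]
  convert hle using 2
  rw [star_sub, star_mul, hg.star_eq]
  noncomm_ring

end Approx

namespace Corr

variable (Z : Corr A B)

lemma ip_add_left (x y z : Z.X) : Z.ip (x + y) z = Z.ip x z + Z.ip y z := by
  rw [← Z.ip_star, Z.ip_add, star_add, Z.ip_star, Z.ip_star]

lemma ip_smul_left (c : ℂ) (x y : Z.X) : Z.ip (c • x) y = star c • Z.ip x y := by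
  rw [← Z.ip_star, Z.ip_smul, star_smul, Z.ip_star]

lemma ip_sm_left (x y : Z.X) (b : B) : Z.ip (Z.sm x b) y = star b * Z.ip x y := by
  rw [← Z.ip_star, Z.ip_sm, star_mul, Z.ip_star]

lemma ip_neg_right (x y : Z.X) : Z.ip x (-y) = -Z.ip x y := by
  rw [← neg_one_smul ℂ y, Z.ip_smul, neg_one_smul]

lemma ip_sub_right (x y z : Z.X) : Z.ip x (y - z) = Z.ip x y - Z.ip x z := by
  rw [sub_eq_add_neg, Z.ip_add, Z.ip_neg_right, sub_eq_add_neg]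

lemma ip_sub_left (x y z : Z.X) : Z.ip (x - y) z = Z.ip x z - Z.ip y z := by
  rw [← Z.ip_star, Z.ip_sub_right, star_sub, Z.ip_star, Z.ip_star]

lemma φ_neg_left (a : A) (x : Z.X) : Z.φ (-a) x = -Z.φ a x := by
  rw [← neg_one_smul ℂ a, Z.φ_smul', neg_one_smul]

lemma eq_zero_of_ip_self_eq_zero {x : Z.X} (h : Z.ip x x = 0) : x = 0 := by
  rw [← norm_eq_zero, ← sq_eq_zero_iff (a := ‖x‖), Z.ip_norm, h, norm_zero]

lemma eq_of_forall_ip_eq {z w : Z.X} (h : ∀ y, Z.ip y z = Z.ip y w) : z = w :=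
  sub_eq_zero.mp <| Z.eq_zero_of_ip_self_eq_zero <| by rw [Z.ip_sub_right, h, sub_self]

lemma φ_sm (a : A) (x : Z.X) (b : B) : Z.φ a (Z.sm x b) = Z.sm (Z.φ a x) b :=
  Z.eq_of_forall_ip_eq fun y => by
    rw [← star_star a, ← Z.φ_adj, Z.ip_sm, Z.ip_sm, Z.φ_adj]

lemma ip_self_nonneg [PartialOrder B] [StarOrderedRing B] (x : Z.X) : 0 ≤ Z.ip x x := by
  obtain ⟨b, hb⟩ := Z.ip_pos x
  exact hb ▸ star_mul_self_nonneg b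

/- A right Hilbert `B`-module is a Hilbert C⋆-module over `Bᵐᵒᵖ` in Mathlib's left-module
convention, so this is `CStarModule.norm_inner_le`. -/
theorem norm_ip_le (x y : Z.X) : ‖Z.ip x y‖ ≤ ‖x‖ * ‖y‖ := by
  let _ := CStarAlgebra.spectralOrder Bᵐᵒᵖ
  have := CStarAlgebra.spectralOrderedRing Bᵐᵒᵖ
  let _ : SMul Bᵐᵒᵖ Z.X := ⟨fun b x => Z.sm x b.unop⟩
  let _ : CStarModule Bᵐᵒᵖ Z.X :=
    { inner := fun x y => MulOpposite.op (Z.ip x y)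
      inner_add_right := by
        intro x y z
        simp [Z.ip_add]
      inner_self_nonneg := by
        intro x
        obtain ⟨b, hb⟩ := Z.ip_pos x
        show 0 ≤ MulOpposite.op (Z.ip x x)
        rw [hb, MulOpposite.op_mul, MulOpposite.op_star]
        exact mul_star_self_nonneg _
      inner_self := by
        intro x
        show MulOpposite.op (Z.ip x x) = 0 ↔ x = 0
        rw [MulOpposite.op_eq_zero_iff, ← norm_eq_zero, ← Z.ip_norm, ← norm_eq_zero (a := x)]
        exact pow_eq_zero_iff two_ne_zero
      inner_op_smul_right := by
        intro a x y
        show MulOpposite.op (Z.ip x (Z.sm y a.unop)) = _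
        simp [Z.ip_sm]
      inner_smul_right_complex := by
        intro z x y
        show MulOpposite.op _ = _
        simp [Z.ip_smul]
      star_inner := by
        intro x y
        show star (MulOpposite.op _) = MulOpposite.op _
        simp [← Z.ip_star x y]
      norm_eq_sqrt_norm_inner_self := by
        intro x
        show _ = √‖Z.ip x x‖
        rw [← Z.ip_norm, Real.sqrt_sq (norm_nonneg x)] }
  exact CStarModule.norm_inner_le Z.X (A := Bᵐᵒᵖ)

def φ₁ (w : Unitization ℂ A) (x : Z.X) : Z.X := w.fst • x + Z.φ w.snd x

lemma φ₁_mul (v w : Unitization ℂ A) (x : Z.X) : Z.φ₁ (v * w) x = Z.φ₁ v (Z.φ₁ w x) := by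
  simp only [φ₁, Unitization.fst_mul, Unitization.snd_mul, Z.φ_add', Z.φ_add, Z.φ_smul',
    Z.φ_smul, Z.φ_mul, smul_add, smul_smul]
  module

lemma ip_φ₁ (w : Unitization ℂ A) (x y : Z.X) :
    Z.ip (Z.φ₁ w x) y = Z.ip x (Z.φ₁ (star w) y) := by
  simp only [φ₁, Z.ip_add_left, Z.ip_add, Z.ip_smul_left, Z.ip_smul, Z.φ_adj,
    Unitization.fst_star, Unitization.snd_star]

/- Write `‖a‖² - a⋆a = s⋆s` in `A⁺¹`; then `⟨φ₁ s x, φ₁ s x⟩ = ‖a‖² ⟨x, x⟩ - ⟨a x, a x⟩`. -/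
lemma ip_φ_self_le [PartialOrder B] [StarOrderedRing B] (a : A) (x : Z.X) :
    Z.ip (Z.φ a x) (Z.φ a x) ≤ (‖a‖ ^ 2 : ℝ) • Z.ip x x := by
  let _ := CStarAlgebra.spectralOrder (Unitization ℂ A)
  have := CStarAlgebra.spectralOrderedRing (Unitization ℂ A)
  obtain ⟨s, hs⟩ := CStarAlgebra.nonneg_iff_eq_star_mul_self.mp <| sub_nonneg.mpr
    (CStarAlgebra.star_mul_le_algebraMap_norm_sq (a := (a : Unitization ℂ A)))
  have key : Z.ip (Z.φ₁ s x) (Z.φ₁ s x) =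
      (‖a‖ ^ 2 : ℝ) • Z.ip x x - Z.ip (Z.φ a x) (Z.φ a x) := by
    rw [Z.ip_φ₁, ← Z.φ₁_mul, ← hs]
    simp only [φ₁, Unitization.algebraMap_eq_inl_comp, Function.comp_apply, sub_eq_add_neg,
      Unitization.fst_add, Unitization.snd_add, Unitization.fst_neg, Unitization.snd_neg,
      Unitization.fst_inl, Unitization.snd_inl, ← Unitization.inr_star, ← Unitization.inr_mul,
      Unitization.fst_inr, Unitization.snd_inr, Unitization.norm_inr, neg_zero, add_zero,
      zero_add, Z.ip_add, Z.ip_smul, Z.φ_neg_left, Z.ip_neg_right, Z.φ_mul, Z.φ_adj]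
    rw [algebraMap_smul]
  exact sub_nonneg.mp (key ▸ Z.ip_self_nonneg _)

theorem norm_φ_le (a : A) (x : Z.X) : ‖Z.φ a x‖ ≤ ‖a‖ * ‖x‖ := by
  let _ := CStarAlgebra.spectralOrder B
  have := CStarAlgebra.spectralOrderedRing B
  have h := CStarAlgebra.norm_le_norm_of_nonneg_of_le (Z.ip_self_nonneg _) (Z.ip_φ_self_le a x)
  rw [norm_smul, ← Z.ip_norm, ← Z.ip_norm, Real.norm_of_nonneg (by positivity), ← mul_pow] at h
  exact (pow_le_pow_iff_left₀ (norm_nonneg _) (by positivity) two_ne_zero).mp h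

theorem norm_sm_le (x : Z.X) (b : B) : ‖Z.sm x b‖ ≤ ‖x‖ * ‖b‖ := by
  have h : ‖Z.sm x b‖ ^ 2 ≤ (‖x‖ * ‖b‖) ^ 2 :=
    calc ‖Z.sm x b‖ ^ 2 = ‖star b * Z.ip x x * b‖ := by rw [Z.ip_norm, Z.ip_sm, Z.ip_sm_left]
      _ ≤ ‖star b‖ * ‖Z.ip x x‖ * ‖b‖ := norm_mul₃_le
      _ = (‖x‖ * ‖b‖) ^ 2 := by rw [norm_star, ← Z.ip_norm]; ring
  exact (pow_le_pow_iff_left₀ (norm_nonneg _) (by positivity) two_ne_zero).mp h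

def ipRightCLM (x : Z.X) : Z.X →L[ℂ] B :=
  LinearMap.mkContinuous ⟨⟨Z.ip x, Z.ip_add x⟩, fun c y => Z.ip_smul c x y⟩ ‖x‖ (Z.norm_ip_le x)

def ipLeftCLM (y : Z.X) : Z.X →L⋆[ℂ] B :=
  LinearMap.mkContinuous ⟨⟨fun x => Z.ip x y, fun x x' => Z.ip_add_left x x' y⟩,
    fun c x => Z.ip_smul_left c x y⟩ ‖y‖ fun x => (Z.norm_ip_le x y).trans_eq (mul_comm _ _)

def φCLM (a : A) : Z.X →L[ℂ] Z.X :=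
  LinearMap.mkContinuous ⟨⟨Z.φ a, Z.φ_add a⟩, Z.φ_smul a⟩ ‖a‖ (Z.norm_φ_le a)

def φApplyCLM (x : Z.X) : A →L[ℂ] Z.X :=
  LinearMap.mkContinuous ⟨⟨fun a => Z.φ a x, fun a a' => Z.φ_add' a a' x⟩,
    fun c a => Z.φ_smul' c a x⟩ ‖x‖ fun a => (Z.norm_φ_le a x).trans_eq (mul_comm _ _)

def smCLM (b : B) : Z.X →L[ℂ] Z.X :=
  LinearMap.mkContinuous ⟨⟨fun x => Z.sm x b, fun x x' => Z.sm_add x x' b⟩,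
    fun c x => Z.sm_smul c x b⟩ ‖b‖ fun x => (Z.norm_sm_le x b).trans_eq (mul_comm _ _)

@[simp] lemma ipRightCLM_apply (x y : Z.X) : Z.ipRightCLM x y = Z.ip x y := rfl
@[simp] lemma ipLeftCLM_apply (x y : Z.X) : Z.ipLeftCLM y x = Z.ip x y := rfl
@[simp] lemma φCLM_apply (a : A) (x : Z.X) : Z.φCLM a x = Z.φ a x := rfl
@[simp] lemma φApplyCLM_apply (a : A) (x : Z.X) : Z.φApplyCLM x a = Z.φ a x := rfl
@[simp] lemma smCLM_apply (b : B) (x : Z.X) : Z.smCLM b x = Z.sm x b := rfl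

lemma ext_of_dense {s : Set Z.X} (hs : (closedSpan s : Set Z.X) = Set.univ) {z z' : Z.X}
    (h : ∀ w ∈ s, Z.ip w z = Z.ip w z') : z = z' := by
  have hker := closedSpan_le (s := s) (ContinuousLinearMap.isClosed_ker (Z.ipLeftCLM (z - z')))
    fun w hw => by simp [Z.ip_sub_right, h w hw]
  exact sub_eq_zero.mp (Z.eq_zero_of_ip_self_eq_zero (hker (mem_closedSpan_of_dense hs _)))

lemma ip_mem_ipSet (x y : Z.X) : Z.ip x y ∈ Z.ipSet :=
  subset_closedSpan _ ⟨x, y, rfl⟩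

lemma closedSpan_subset_ipSet {s : Set B} (hs : s ⊆ Z.ipSet) :
    (closedSpan s : Set B) ⊆ Z.ipSet :=
  closedSpan_le (isClosed_closedSpan _) hs

lemma isCIdeal_ipSet : IsCIdeal Z.ipSet where
  isClosed := isClosed_closedSpan _
  zero_mem := (closedSpan _).zero_mem
  add_mem _ _ := (closedSpan _).add_mem
  smul_mem c _ := (closedSpan _).smul_mem c
  mul_left_mem b := closedSpan_mapsTo (ContinuousLinearMap.mul ℂ B b) <| by
    rintro _ ⟨x, y, rfl⟩
    show b * Z.ip x y ∈ Z.ipSet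
    simpa [Z.ip_sm_left] using Z.ip_mem_ipSet (Z.sm x (star b)) y
  mul_right_mem b := closedSpan_mapsTo ((ContinuousLinearMap.mul ℂ B).flip b) <| by
    rintro _ ⟨x, y, rfl⟩
    show Z.ip x y * b ∈ Z.ipSet
    simpa [Z.ip_sm] using Z.ip_mem_ipSet x (Z.sm y b)

lemma star_mem_ipSet {p : B} (hp : p ∈ Z.ipSet) : star p ∈ Z.ipSet :=
  closedSpan_mapsTo (starL ℂ : B ≃L⋆[ℂ] B).toContinuousLinearMap (by
    rintro _ ⟨x, y, rfl⟩
    show star (Z.ip x y) ∈ Z.ipSet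
    simpa [Z.ip_star] using Z.ip_mem_ipSet y x) hp

lemma ipSet_eq_of_dense {s : Set Z.X} (hs : (closedSpan s : Set Z.X) = Set.univ) :
    Z.ipSet = closedSpan (Set.image2 Z.ip s s) := by
  show ((closedSpan {b | ∃ x y, b = Z.ip x y} : Submodule ℂ B) : Set B) = _
  congr 1
  refine le_antisymm (closedSpan_mono ?_) (closedSpan_mono ?_)
  · rintro _ ⟨x, y, rfl⟩
    exact closedSpan_mapsTo (Z.ipLeftCLM y) (t := Set.image2 Z.ip s s) (fun x' hx' =>
      closedSpan_mapsTo (Z.ipRightCLM x') (t := Set.image2 Z.ip s s)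
        (fun y' hy' => subset_closedSpan _ (Set.mem_image2_of_mem hx' hy'))
        (mem_closedSpan_of_dense hs y)) (mem_closedSpan_of_dense hs x)
  · rintro _ ⟨x, -, y, -, rfl⟩
    exact subset_closedSpan _ ⟨x, y, rfl⟩

lemma mem_closure_sm_ip_self_mul (z : Z.X) :
    z ∈ closure (Set.range fun h => Z.sm z (Z.ip z z * h)) := by
  let _ := CStarAlgebra.spectralOrder B
  have := CStarAlgebra.spectralOrderedRing B
  refine mem_closure_of_forall_norm_sub_sq_le fun δ hδ => ?_
  obtain ⟨g, ⟨h, rfl⟩, hg, hle⟩ := exists_approxUnit_of_nonneg (Z.ip_self_nonneg z) hδ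
  refine ⟨_, ⟨h, rfl⟩, ?_⟩
  rw [Z.ip_norm]
  convert hle using 2
  rw [Z.ip_sub_left, Z.ip_sub_right, Z.ip_sub_right, Z.ip_sm, Z.ip_sm_left, Z.ip_sm_left, Z.ip_sm,
    hg.star_eq]
  noncomm_ring

variable {Z}

lemma mem_setR_of_ip_self_mem {J : Set B} (hJ : IsCIdeal J) {z : Z.X} (hz : Z.ip z z ∈ J) :
    z ∈ Z.setR J := by
  refine closure_minimal ?_ (isClosed_closedSpan _) (Z.mem_closure_sm_ip_self_mul z)
  rintro _ ⟨h, rfl⟩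
  exact subset_closedSpan _ ⟨z, _, hJ.mul_right_mem h _ hz, rfl⟩

lemma mem_setR_ipSet (z : Z.X) : z ∈ Z.setR Z.ipSet :=
  mem_setR_of_ip_self_mem Z.isCIdeal_ipSet (Z.ip_mem_ipSet z z)

lemma φ_mem_comp2 {I : Set A} {J : Set B} (hI : IsCIdeal I) (hIJ : I ⊆ Z.inv J) {a : A}
    (ha : a ∈ I) (x : Z.X) : Z.φ a x ∈ Z.comp2 I J := by
  have hφ : ∀ g ∈ I, Z.φ a (Z.φ g x) ∈ Z.comp2 I J := fun g hg =>
    closedSpan_mapsTo (Z.φCLM a) (by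
      rintro _ ⟨ξ, b, hb, rfl⟩
      exact subset_closedSpan _ ⟨a, ξ, b, ha, hb, Z.φ_sm a ξ b⟩) (hIJ hg x)
  refine (isClosed_closedSpan _).closure_subset <|
    map_mem_closure (f := Z.φApplyCLM x) (Z.φApplyCLM x).continuous
      (mem_closure_mul_star_mul_self_mul a) ?_
  rintro _ ⟨h, rfl⟩
  rw [φApplyCLM_apply, Z.φ_mul]
  exact hφ _ (hI.mul_right_mem _ _ (hI.mul_left_mem _ _ ha))

/- Factor `d ≈ d g` with `g = d⋆d h`; then `⟨η, φ (d g) η'⟩ = ⟨φ d⋆ η, φ g η'⟩`. -/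
lemma ip_φ_mem_closedSpan_ip_comp2 {I : Set A} (hI : IsCIdeal I)
    (hI_star : ∀ d ∈ I, star d ∈ I) {d : A} (hd : d ∈ I) (η η' : Z.X) :
    Z.ip η (Z.φ d η') ∈ closedSpan {b | ∃ y y', y ∈ Z.comp2 I Z.ipSet ∧
      y' ∈ Z.comp2 I Z.ipSet ∧ b = Z.ip y y'} := by
  have hinv : I ⊆ Z.inv Z.ipSet := fun _ _ _ => mem_setR_ipSet _
  refine (isClosed_closedSpan _).closure_subset <|
    map_mem_closure (f := (Z.ipRightCLM η).comp (Z.φApplyCLM η'))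
      (ContinuousLinearMap.continuous _) (mem_closure_mul_star_mul_self_mul d) ?_
  rintro _ ⟨h, rfl⟩
  have hg : star d * d * h ∈ I := hI.mul_right_mem _ _ (hI.mul_left_mem _ _ hd)
  have hadj := Z.φ_adj (star d) η (Z.φ (star d * d * h) η')
  rw [star_star] at hadj
  rw [ContinuousLinearMap.comp_apply, φApplyCLM_apply, ipRightCLM_apply, Z.φ_mul, ← hadj]
  exact subset_closedSpan _
    ⟨_, _, φ_mem_comp2 hI hinv (hI_star d hd) η, φ_mem_comp2 hI hinv hg η', rfl⟩

end Corr

namespace IsTensor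

variable {C : Type} [NonUnitalCStarAlgebra C] {Z₁ : Corr A B} {Z₂ : Corr B C} {T : Corr A C}
  {t : Z₁.X → Z₂.X → T.X} (ht : IsTensor Z₁ Z₂ T t)
include ht

lemma smul_right (c : ℂ) (x : Z₁.X) (y : Z₂.X) : t x (c • y) = c • t x y :=
  T.ext_of_dense ht.dense <| by
    rintro _ ⟨x', y', rfl⟩
    rw [ht.inner, T.ip_smul, ht.inner, Z₂.φ_smul, Z₂.ip_smul]

lemma norm_le (x : Z₁.X) (y : Z₂.X) : ‖t x y‖ ≤ ‖x‖ * ‖y‖ := by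
  have h : ‖t x y‖ ^ 2 ≤ (‖x‖ * ‖y‖) ^ 2 :=
    calc ‖t x y‖ ^ 2 = ‖Z₂.ip y (Z₂.φ (Z₁.ip x x) y)‖ := by rw [T.ip_norm, ht.inner]
      _ ≤ ‖y‖ * (‖Z₁.ip x x‖ * ‖y‖) :=
        (Z₂.norm_ip_le _ _).trans (mul_le_mul_of_nonneg_left (Z₂.norm_φ_le _ _) (norm_nonneg _))
      _ = (‖x‖ * ‖y‖) ^ 2 := by rw [← Z₁.ip_norm]; ring
  exact (pow_le_pow_iff_left₀ (norm_nonneg _) (by positivity) two_ne_zero).mp h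

def leftCLM (y : Z₂.X) : Z₁.X →L[ℂ] T.X :=
  LinearMap.mkContinuous ⟨⟨(t · y), (ht.add_left · · y)⟩, (ht.smul_left · · y)⟩ ‖y‖
    fun x => (ht.norm_le x y).trans_eq (mul_comm _ _)

def rightCLM (x : Z₁.X) : Z₂.X →L[ℂ] T.X :=
  LinearMap.mkContinuous ⟨⟨t x, ht.add_right x⟩, (ht.smul_right · x)⟩ ‖x‖ (ht.norm_le x)

@[simp] lemma leftCLM_apply (x : Z₁.X) (y : Z₂.X) : ht.leftCLM y x = t x y := rfl

@[simp] lemma rightCLM_apply (x : Z₁.X) (y : Z₂.X) : ht.rightCLM x y = t x y := rfl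

lemma ipSet_eq :
    T.ipSet = closedSpan {c | ∃ x x' y y', c = Z₂.ip y (Z₂.φ (Z₁.ip x x') y')} := by
  rw [T.ipSet_eq_of_dense ht.dense]
  congr 2
  ext c
  constructor
  · rintro ⟨_, ⟨x, y, rfl⟩, _, ⟨x', y', rfl⟩, rfl⟩
    exact ⟨x, x', y, y', ht.inner x x' y y'⟩
  · rintro ⟨x, x', y, y', rfl⟩
    exact ⟨_, ⟨x, y, rfl⟩, _, ⟨x', y', rfl⟩, ht.inner x x' y y'⟩

lemma ipSet_subset_ipSet_right : T.ipSet ⊆ Z₂.ipSet := by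
  rw [ht.ipSet_eq]
  refine Z₂.closedSpan_subset_ipSet ?_
  rintro _ ⟨x, x', y, y', rfl⟩
  exact Z₂.ip_mem_ipSet _ _

lemma ip_φ_mem_ipSet {b : B} (hb : b ∈ Z₁.ipSet) (y y' : Z₂.X) :
    Z₂.ip y (Z₂.φ b y') ∈ T.ipSet := by
  refine closedSpan_mapsTo ((Z₂.ipRightCLM y).comp (Z₂.φApplyCLM y'))
    (t := {c | ∃ z z', c = T.ip z z'}) ?_ hb
  rintro _ ⟨x, x', rfl⟩
  rw [ContinuousLinearMap.comp_apply, Corr.φApplyCLM_apply, Corr.ipRightCLM_apply, ← ht.inner]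
  exact T.ip_mem_ipSet _ _

lemma mem_comp2 {I : Set A} {J J' : Set B} {K : Set C} {r : Z₁.X} {s : Z₂.X}
    (hr : r ∈ Z₁.comp2 I J) (hs : s ∈ Z₂.comp2 J' K) : t r s ∈ T.comp2 I K := by
  refine closedSpan_mapsTo (ht.leftCLM s) ?_ hr
  rintro _ ⟨a, ρ, b, ha, -, rfl⟩
  rw [leftCLM_apply]
  refine closedSpan_mapsTo (ht.rightCLM _) ?_ hs
  rintro _ ⟨b', σ, c, -, hc, rfl⟩
  rw [rightCLM_apply, ht.balanced, Z₂.φ_sm, ← Z₂.φ_mul, ht.sm_right, ← ht.act_left]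
  exact subset_closedSpan _ ⟨a, _, c, ha, hc, rfl⟩

theorem closure_span_comp2 {I : Set A} {J : Set B} (hI : IsCIdeal I) (hIJ : I ⊆ Z₁.inv J)
    (K : Set C) :
    closure (Submodule.span ℂ
        {z | ∃ r s, r ∈ Z₁.comp2 I J ∧ s ∈ Z₂.comp2 J K ∧ z = t r s} : Set T.X) =
      T.comp2 I K := by
  set L := {z | ∃ r s, r ∈ Z₁.comp2 I J ∧ s ∈ Z₂.comp2 J K ∧ z = t r s}
  have hL : ∀ r ∈ Z₁.comp2 I J, ∀ s, ∀ c ∈ K, t r (Z₂.sm s c) ∈ closedSpan L := by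
    intro r hr s c hc
    refine closedSpan_mapsTo (ht.leftCLM _) ?_ hr
    rintro _ ⟨a, ρ, b, ha, hb, rfl⟩
    rw [leftCLM_apply, ht.balanced]
    exact subset_closedSpan _ ⟨_, _, Z₁.φ_mem_comp2 hI hIJ ha ρ,
      subset_closedSpan _ ⟨b, s, c, hb, hc, Z₂.φ_sm b s c⟩, rfl⟩
  refine Set.Subset.antisymm ?_ ?_
  · refine closedSpan_le (isClosed_closedSpan _) ?_
    rintro _ ⟨r, s, hr, hs, rfl⟩
    exact ht.mem_comp2 hr hs
  · refine closedSpan_le (isClosed_closedSpan _) ?_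
    rintro _ ⟨a, ξ, c, ha, hc, rfl⟩
    refine closedSpan_mapsTo ((T.smCLM c).comp (T.φCLM a)) ?_ (mem_closedSpan_of_dense ht.dense ξ)
    rintro _ ⟨r, s, rfl⟩
    rw [ContinuousLinearMap.comp_apply, Corr.φCLM_apply, Corr.smCLM_apply, ht.act_left,
      ← ht.sm_right]
    exact hL _ (Z₁.φ_mem_comp2 hI hIJ ha r) s c hc

end IsTensor

namespace IsTensor

variable {X : Corr A A} {Y : Corr B B} {R : Corr A B} {S : Corr B A}
  {t : R.X → S.X → X.X} {u : S.X → R.X → Y.X} (ht : IsTensor R S X t) (hu : IsTensor S R Y u)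
include ht hu

lemma ip_φ_mem_ipSet_of_mem_ipSet {a : A} (ha : a ∈ X.ipSet) (r r' : R.X) :
    R.ip r (R.φ a r') ∈ Y.ipSet :=
  hu.ip_φ_mem_ipSet (ht.ipSet_subset_ipSet_right ha) r r'

lemma ipSet_subset_inv : X.ipSet ⊆ R.inv Y.ipSet := fun _ ha r =>
  Corr.mem_setR_of_ip_self_mem Y.isCIdeal_ipSet (ht.ip_φ_mem_ipSet_of_mem_ipSet hu ha _ r)

lemma ipSet_subset_ipSet_of_full (hfull : X.ipSet = Set.univ) : R.ipSet ⊆ Y.ipSet := by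
  refine Y.closedSpan_subset_ipSet ?_
  rintro _ ⟨r, r', rfl⟩
  refine closedSpan_mapsTo (R.ipLeftCLM r') ?_ (mem_closedSpan_of_dense R.nondeg r)
  rintro _ ⟨a, ξ, rfl⟩
  rw [Corr.ipLeftCLM_apply, R.φ_adj]
  exact ht.ip_φ_mem_ipSet_of_mem_ipSet hu (hfull ▸ Set.mem_univ _) ξ r'

/- `⟨σ, σ'⟩ ∈ A = ⟨X, X⟩` is approximated by the `⟨σ₁, ⟨ρ, ρ'⟩ σ₂⟩`, and
`⟨r, ⟨σ₁, ⟨ρ, ρ'⟩ σ₂⟩ r'⟩ = ⟨u σ₁ r, ⟨ρ, ρ'⟩ (u σ₂ r')⟩` with `⟨ρ, ρ'⟩ ∈ ⟨R, R⟩ ⊆ J`. -/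
lemma ipSet_subset_closedSpan_ip_φ (hfull : X.ipSet = Set.univ) :
    Y.ipSet ⊆ closedSpan {b | ∃ η η' d, d ∈ Y.ipSet ∧ b = Y.ip η (Y.φ d η')} := by
  intro p hp
  rw [hu.ipSet_eq] at hp
  refine closedSpan_le (isClosed_closedSpan _) ?_ hp
  rintro _ ⟨σ, σ', r, r', rfl⟩
  have hc : S.ip σ σ' ∈ X.ipSet := hfull ▸ Set.mem_univ _
  rw [ht.ipSet_eq] at hc
  refine closedSpan_mapsTo ((R.ipRightCLM r).comp (R.φApplyCLM r')) ?_ hc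
  rintro _ ⟨ρ, ρ', σ₁, σ₂, rfl⟩
  rw [ContinuousLinearMap.comp_apply, Corr.φApplyCLM_apply, Corr.ipRightCLM_apply, ← hu.inner,
    ← hu.act_left]
  exact subset_closedSpan _ ⟨_, _, _,
    ht.ipSet_subset_ipSet_of_full hu hfull (R.ip_mem_ipSet ρ ρ'), rfl⟩

end IsTensor

/-- The canonical map `r ⊗_J s ↦ r ⊗_B s` is automatically isometric and bimodule-equivariant
(being a restriction of `t`), so the isomorphism statement is equivalent to the assertion that the
closed span of `{t r s : r ∈ IRJ, s ∈ JSI}` is exactly `IXI` (and likewise for `Y`);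
this is how it is stated here. -/
theorem stmt14 (X : Corr A A) (Y : Corr B B) (R : Corr A B) (S : Corr B A)
    (t : R.X → S.X → X.X) (ht : IsTensor R S X t)
    (u : S.X → R.X → Y.X) (hu : IsTensor S R Y u) :
    (closure (Submodule.span ℂ
        {z : X.X | ∃ r s, r ∈ R.comp2 X.ipSet Y.ipSet ∧ s ∈ S.comp2 Y.ipSet X.ipSet ∧
          z = t r s} : Set X.X)
      = X.comp2 X.ipSet X.ipSet) ∧
    (closure (Submodule.span ℂ
        {z : Y.X | ∃ s r, s ∈ S.comp2 Y.ipSet X.ipSet ∧ r ∈ R.comp2 X.ipSet Y.ipSet ∧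
          z = u s r} : Set Y.X)
      = Y.comp2 Y.ipSet Y.ipSet) ∧
    (X.ipSet = Set.univ →
      closure (Submodule.span ℂ
        {b : B | ∃ y y', y ∈ Y.comp2 Y.ipSet Y.ipSet ∧ y' ∈ Y.comp2 Y.ipSet Y.ipSet ∧
          b = Y.ip y y'} : Set B)
      = Y.ipSet) := by
  refine ⟨ht.closure_span_comp2 X.isCIdeal_ipSet (ht.ipSet_subset_inv hu) _,
    hu.closure_span_comp2 Y.isCIdeal_ipSet (hu.ipSet_subset_inv ht) _, fun hfull => ?_⟩
  refine Set.Subset.antisymm (Y.closedSpan_subset_ipSet ?_) ?_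
  · rintro _ ⟨y, y', -, -, rfl⟩
    exact Y.ip_mem_ipSet y y'
  · refine (ht.ipSet_subset_closedSpan_ip_φ hu hfull).trans
      (closedSpan_le (isClosed_closedSpan _) ?_)
    rintro _ ⟨η, η', d, hd, rfl⟩
    exact Y.ip_φ_mem_closedSpan_ip_comp2 Y.isCIdeal_ipSet (fun _ => Y.star_mem_ipSet) hd η η'
end
end
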